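/- arXiv:1509.08861 — 2 statements merged into one kernel-verified Lean document; each statement's English description precedes it below -/
import Mathlib

section
/- The Gegenbauer polynomial C_l^α(t) is identically zero if and only if l ≥ 1 and α ∈ {0, -1, -2, ..., -⌊(l-1)/2⌋}. -/
/-!
Each coefficient of `C_l^α` is a nonzero multiple of the Pochhammer value `(α)_{l-k}`, and the
lowest one (`k = ⌊l/2⌋`) involves the shortest product `(α)_{⌈l/2⌉}`, which divides all the others.
So `C_l^α = 0` exactly when `(α)_{⌈l/2⌉} = 0`, i.e. when `α = -m` with `m < ⌈l/2⌉`.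
-/

open scoped BigOperators

/-- The Gegenbauer polynomial `C_l^α(t)`, with the quotient `Γ(l-k+α)/Γ(α)`
interpreted as the rising factorial `α(α+1)⋯(α+l-k-1)`. -/
noncomputable def gegenbauer (l : ℕ) (α : ℂ) : Polynomial ℂ :=
  ∑ k ∈ Finset.range (l / 2 + 1),
    Polynomial.C ((-1 : ℂ) ^ k *
        (∏ j ∈ Finset.range (l - k), (α + j)) /
        ((Nat.factorial (l - 2 * k) : ℂ) * (Nat.factorial k : ℂ)) *
        2 ^ (l - 2 * k)) *
      Polynomial.X ^ (l - 2 * k)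

open Polynomial Finset
open scoped Nat

theorem ascPochhammer_eval_eq_prod_range {R : Type*} [CommSemiring R] (n : ℕ) (r : R) :
    (ascPochhammer R n).eval r = ∏ j ∈ range n, (r + j) := by
  induction n with
  | zero => simp
  | succ n ih => rw [ascPochhammer_succ_eval, ih, prod_range_succ]

theorem ascPochhammer_eval_eq_zero_of_le {R : Type*} [CommSemiring R] {m n : ℕ} (h : m ≤ n)
    {r : R} (hr : (ascPochhammer R m).eval r = 0) : (ascPochhammer R n).eval r = 0 := by
  obtain ⟨d, rfl⟩ := Nat.exists_eq_add_of_le h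
  rw [← ascPochhammer_mul, eval_mul, hr, zero_mul]

theorem gegenbauer_eq_sum_ascPochhammer (l : ℕ) (α : ℂ) :
    gegenbauer l α = ∑ k ∈ range (l / 2 + 1),
      C ((-1) ^ k * (ascPochhammer ℂ (l - k)).eval α / ((l - 2 * k)! * k !) * 2 ^ (l - 2 * k)) *
        X ^ (l - 2 * k) := by
  simp only [gegenbauer, ascPochhammer_eval_eq_prod_range]

theorem coeff_gegenbauer_sub_two_mul {l k : ℕ} (hk : k ≤ l / 2) (α : ℂ) :
    (gegenbauer l α).coeff (l - 2 * k) =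
      (-1) ^ k * (ascPochhammer ℂ (l - k)).eval α / ((l - 2 * k)! * k !) * 2 ^ (l - 2 * k) := by
  rw [gegenbauer_eq_sum_ascPochhammer, finsetSum_coeff, sum_eq_single k]
  · rw [coeff_C_mul_X_pow, if_pos rfl]
  · intro i hi hik
    rw [coeff_C_mul_X_pow, if_neg]
    simp only [mem_range] at hi
    omega
  · simp only [mem_range, not_lt]
    omega

theorem gegenbauer_eq_zero_iff_ascPochhammer_eval_eq_zero (l : ℕ) (α : ℂ) :
    gegenbauer l α = 0 ↔ (ascPochhammer ℂ (l - l / 2)).eval α = 0 := by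
  constructor
  · intro h
    have hcoeff := coeff_gegenbauer_sub_two_mul (l := l) le_rfl α
    simpa [h, Nat.factorial_ne_zero] using hcoeff.symm
  · intro h
    rw [gegenbauer_eq_sum_ascPochhammer]
    refine sum_eq_zero fun k hk => ?_
    rw [mem_range] at hk
    rw [ascPochhammer_eval_eq_zero_of_le (by omega) h]
    simp

/-- `C_l^α ≡ 0` iff `l ≥ 1` and `α ∈ {0, -1, …, -⌊(l-1)/2⌋}`. -/
theorem stmt5 (l : ℕ) (α : ℂ) :
    gegenbauer l α = 0 ↔ 1 ≤ l ∧ ∃ m : ℕ, m ≤ (l - 1) / 2 ∧ α = -(m : ℂ) := by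
  rw [gegenbauer_eq_zero_iff_ascPochhammer_eval_eq_zero, ascPochhammer_eval_eq_zero_iff]
  constructor
  · rintro ⟨m, hm, hmα⟩
    exact ⟨by omega, m, by omega, by rw [hmα, neg_neg]⟩
  · rintro ⟨hl, m, hm, rfl⟩
    exact ⟨m, by omega, by rw [neg_neg]⟩
end

section
/- If X is a finitely generated module over a Lie algebra g that is locally finite as an h-module for a Lie subalgebra h ⊆ g, then the associated variety V_g(X) is contained in the annihilator h^⊥ = {x ∈ g* : x|_h = 0}. -/
open scoped BigOperators

/-- Lemma (3) on associated varieties: let `X` be a finitely generated `g`-module with a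
good filtration `F`, and `h ⊆ g` a Lie subalgebra acting locally finitely on `X`.  Then
the associated variety `V_g(X)` is contained in `h^⊥ = {ξ ∈ g* : ξ|_h = 0}`.  Here a
point `ξ ∈ g*` lies in `V_g(X)` iff every homogeneous element of `Ann_{S(g)}(gr X)`
(i.e. every degree-`d` symbol `Σ_k c_k σ(y_{k,1})⋯σ(y_{k,d})` whose lift maps
`F i` into `F (i+d-1)` for all `i`) vanishes at `ξ`. -/
theorem stmt17 {L : Type*} [LieRing L] [LieAlgebra ℂ L] [FiniteDimensional ℂ L]
    {X : Type*} [AddCommGroup X] [Module ℂ X] [LieRingModule L X] [LieModule ℂ L X]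
    (h : LieSubalgebra ℂ L)
    (F : ℕ → Submodule ℂ X)
    (hmono : Monotone F)
    (hfd : ∀ i, FiniteDimensional ℂ (F i))
    (hexh : ∀ x : X, ∃ i, x ∈ F i)
    (hact : ∀ i (y : L) (x : X), x ∈ F i → ⁅y, x⁆ ∈ F (i + 1))
    (hgood : ∃ n, ∀ i ≥ n, F (i + 1) = F i ⊔
      Submodule.span ℂ {z : X | ∃ y : L, ∃ x ∈ F i, z = ⁅y, x⁆})
    (hlocfin : ∀ x : X, ∃ W : Submodule ℂ X, FiniteDimensional ℂ W ∧ x ∈ W ∧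
      ∀ y ∈ h, ∀ w ∈ W, ⁅y, w⁆ ∈ W)
    (ξ : Module.Dual ℂ L)
    (hξ : ∀ d : ℕ, 0 < d → ∀ m : ℕ, ∀ c : Fin m → ℂ, ∀ y : Fin m → Fin d → L,
      (∀ i (x : X), x ∈ F i →
        (∑ k, c k • (List.ofFn (y k)).foldr (fun a b => ⁅a, b⁆) x) ∈ F (i + d - 1)) →
      ∑ k, c k * ∏ j, ξ (y k j) = 0) :
    ∀ y ∈ h, ξ y = 0 := by
  intro y hy
  obtain ⟨n, hn⟩ := hgood
  set T : Module.End ℂ X := LieModule.toEnd ℂ L X y with hT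
  have hTapp : ∀ x : X, T x = ⁅y, x⁆ := fun x => rfl
  -- basic: T^k maps F i to F (i+k)
  have pow_mem : ∀ (k i : ℕ) (x : X), x ∈ F i → (T ^ k) x ∈ F (i + k) := by
    intro k
    induction k with
    | zero => intro i x hx; simpa using hx
    | succ k ih =>
      intro i x hx
      have : (T ^ (k + 1)) x = (T ^ k) (T x) := by
        rw [pow_succ]; rfl
      rw [this]
      have := ih (i + 1) (T x) (by rw [hTapp]; exact hact i y x hx)
      simpa [Nat.add_assoc, Nat.add_comm 1 k] using this
  -- Leibniz defect lemma
  have defect : ∀ (k i : ℕ) (u : L) (x : X), x ∈ F i →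
      (T ^ k) ⁅u, x⁆ - ⁅u, (T ^ k) x⁆ ∈ F (i + k) := by
    intro k
    induction k with
    | zero => intro i u x hx; simp
    | succ k ih =>
      intro i u x hx
      have e1 : ∀ z : X, (T ^ (k + 1)) z = T ((T ^ k) z) := by
        intro z; rw [pow_succ']; rfl
      have hB : (T ^ k) x ∈ F (i + k) := pow_mem k i x hx
      have key : (T ^ (k + 1)) ⁅u, x⁆ - ⁅u, (T ^ (k + 1)) x⁆ =
          T ((T ^ k) ⁅u, x⁆ - ⁅u, (T ^ k) x⁆) + ⁅⁅y, u⁆, (T ^ k) x⁆ := by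
        rw [e1, e1]
        simp only [hTapp, lie_sub]
        rw [leibniz_lie, ← lie_skew y u, neg_lie]
        abel
      rw [key]
      have m1 : T ((T ^ k) ⁅u, x⁆ - ⁅u, (T ^ k) x⁆) ∈ F (i + k + 1) := by
        rw [hTapp]; exact hact _ y _ (ih i u x hx)
      have m2 : ⁅⁅y, u⁆, (T ^ k) x⁆ ∈ F (i + k + 1) := hact _ _ _ hB
      simpa [Nat.add_assoc] using (F (i + k + 1)).add_mem m1 m2
  -- construct W
  classical
  have Wex : ∀ S : Finset X, ∃ W : Submodule ℂ X, FiniteDimensional ℂ W ∧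
      ↑S ⊆ (W : Set X) ∧ ∀ w ∈ W, T w ∈ W := by
    intro S
    induction S using Finset.induction_on with
    | empty => exact ⟨⊥, inferInstance, by simp, by simp⟩
    | @insert a s _ ih =>
      obtain ⟨W1, hW1fd, hW1mem, hW1inv⟩ := ih
      obtain ⟨W2, hW2fd, haW2, hW2inv⟩ := hlocfin a
      refine ⟨W1 ⊔ W2, inferInstance, ?_, ?_⟩
      · intro z hz
        rcases Finset.mem_insert.mp hz with rfl | hz
        · exact Submodule.mem_sup_right haW2
        · exact Submodule.mem_sup_left (hW1mem hz)
      · intro w hw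
        obtain ⟨w1, h1, w2, h2, rfl⟩ := Submodule.mem_sup.mp hw
        rw [map_add]
        exact (W1 ⊔ W2).add_mem (Submodule.mem_sup_left (hW1inv w1 h1))
          (Submodule.mem_sup_right (by rw [hTapp]; exact hW2inv y hy w2 h2))
  obtain ⟨S, hSspan⟩ := (Submodule.fg_iff_finiteDimensional (F n)).mpr (hfd n)
  obtain ⟨W, hWfd, hSW, hWinv⟩ := Wex S
  have hFnW : F n ≤ W := by rw [← hSspan]; exact Submodule.span_le.mpr hSW
  -- Cayley–Hamilton on W
  set d : ℕ := Module.finrank ℂ W + 1 with hd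
  have hd0 : 0 < d := Nat.succ_pos _
  set T' : Module.End ℂ W := T.restrict hWinv with hT'
  set q : Polynomial ℂ := Polynomial.X * T'.charpoly with hq
  have hqmonic : q.Monic := Polynomial.monic_X.mul (T'.charpoly_monic)
  have hqdeg : q.natDegree = d := by
    rw [hq, Polynomial.natDegree_mul Polynomial.X_ne_zero T'.charpoly_monic.ne_zero,
      Polynomial.natDegree_X, T'.charpoly_natDegree, hd, Nat.add_comm]
  have hqzero : Polynomial.aeval T' q = 0 := by
    rw [hq, map_mul, T'.aeval_self_charpoly, mul_zero]
  -- coe of restricted powers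
  have pow_coe : ∀ (k : ℕ) (w : W), ((T' ^ k) w : X) = (T ^ k) (w : X) := by
    intro k
    induction k with
    | zero => intro w; simp
    | succ k ih =>
      intro w
      have e1 : (T' ^ (k + 1)) w = T' ((T' ^ k) w) := by rw [pow_succ']; rfl
      have e2 : (T ^ (k + 1)) (w : X) = T ((T ^ k) (w : X)) := by rw [pow_succ']; rfl
      rw [e1, e2, ← ih]
      simp [hT', LinearMap.restrict_apply]
  -- key on W: T^d drops a degree
  have keyW : ∀ (i : ℕ) (x : X), x ∈ W → x ∈ F i → (T ^ d) x ∈ F (i + d - 1) := by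
    intro i x hxW hxF
    have h0 : (Polynomial.aeval T' q) ⟨x, hxW⟩ = 0 := by rw [hqzero]; simp
    have h1 : ∑ j ∈ Finset.range (d + 1), q.coeff j • (T' ^ j) ⟨x, hxW⟩ = 0 := by
      rw [Polynomial.aeval_eq_sum_range] at h0
      simp only [LinearMap.sum_apply, LinearMap.smul_apply, hqdeg] at h0
      exact h0
    have h2 : ∑ j ∈ Finset.range (d + 1), q.coeff j • (T ^ j) x = 0 := by
      have := congrArg (Submodule.subtype W) h1
      simpa [map_sum, pow_coe] using this
    rw [Finset.sum_range_succ] at h2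
    have hcd : q.coeff d = 1 := by
      have := hqmonic.coeff_natDegree; rwa [hqdeg] at this
    rw [hcd, one_smul] at h2
    have h3 : (T ^ d) x = -∑ j ∈ Finset.range d, q.coeff j • (T ^ j) x := by
      linear_combination (norm := module) h2
    rw [h3]
    refine (F (i + d - 1)).neg_mem (Submodule.sum_mem _ ?_)
    intro j hj
    have hj' : j < d := Finset.mem_range.mp hj
    exact (F (i + d - 1)).smul_mem _ (hmono (by omega) (pow_mem j i x hxF))
  -- key everywhere
  have keyN : ∀ (j : ℕ) (x : X), x ∈ F (n + j) → (T ^ d) x ∈ F (n + j + d - 1) := by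
    intro j
    induction j with
    | zero => intro x hx; exact keyW n x (hFnW hx) hx
    | succ j ih =>
      intro x hx
      have hx' : x ∈ F (n + j) ⊔ Submodule.span ℂ
          {z : X | ∃ u : L, ∃ w ∈ F (n + j), z = ⁅u, w⁆} := by
        rw [← hn (n + j) (Nat.le_add_right n j)]
        exact hx
      have hle : F (n + j) ⊔ Submodule.span ℂ
          {z : X | ∃ u : L, ∃ w ∈ F (n + j), z = ⁅u, w⁆} ≤
          Submodule.comap (T ^ d) (F (n + (j + 1) + d - 1)) := by
        refine sup_le ?_ ?_
        · intro w hw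
          have := ih w hw
          exact hmono (by omega) this
        · rw [Submodule.span_le]
          rintro z ⟨u, w, hw, rfl⟩
          have hdef := defect d (n + j) u w hw
          have hbr : ⁅u, (T ^ d) w⁆ ∈ F (n + j + d - 1 + 1) := hact _ u _ (ih w hw)
          have : (T ^ d) ⁅u, w⁆ =
              ((T ^ d) ⁅u, w⁆ - ⁅u, (T ^ d) w⁆) + ⁅u, (T ^ d) w⁆ := by abel
          simp only [Submodule.mem_comap, SetLike.mem_coe]
          rw [this]
          refine (F (n + (j + 1) + d - 1)).add_mem (hmono (by omega) hdef)
            (hmono (by omega) hbr)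
      exact hle hx'
  have key : ∀ (i : ℕ) (x : X), x ∈ F i → (T ^ d) x ∈ F (i + d - 1) := by
    intro i x hx
    rcases le_or_gt n i with hni | hin
    · obtain ⟨j, rfl⟩ := Nat.exists_eq_add_of_le hni
      exact keyN j x hx
    · exact keyW i x (hFnW (hmono hin.le hx)) hx
  -- foldr = T^k
  have foldr_eq : ∀ (k : ℕ) (x : X),
      (List.ofFn (fun _ : Fin k => y)).foldr (fun a b => ⁅a, b⁆) x = (T ^ k) x := by
    intro k
    induction k with
    | zero => intro x; simp
    | succ k ih =>
      intro x
      rw [List.ofFn_succ, List.foldr_cons, ih, ← hTapp]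
      rw [pow_succ']; rfl
  -- conclude
  have := hξ d hd0 1 (fun _ => 1) (fun _ _ => y) ?_
  · simp only [Fin.sum_univ_one, one_mul, Finset.prod_const, Finset.card_univ,
      Fintype.card_fin] at this
    exact (pow_eq_zero_iff (by omega : d ≠ 0)).mp this
  · intro i x hx
    simp only [Fin.sum_univ_one, one_smul, foldr_eq]
    exact key i x hx
end
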